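/- arXiv:1002.1767 — 5 statements merged into one kernel-verified Lean document; each statement's English description precedes it below -/
import Mathlib

section
/- Let g be a finite-dimensional complex inner product space equipped with a complex Lie algebra structure, and let h : g → g be a ℂ-linear Lie algebra automorphism (bijective with h⁅x,y⁆ = ⁅h x, h y⁆ for all x, y) which is self-adjoint with respect to the inner product and positive definite (⟨h x, x⟩ > 0 for all x ≠ 0). Then there exists a self-adjoint ℂ-linear map H : g → g which is a derivation of the Lie algebra (H⁅x,y⁆ = ⁅H x, y⁆ + ⁅x, H y⁆ for all x, y) such that exp(H) = h. -/
open scoped ComplexInnerProductSpace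

/-!
Diagonalise `h` in an orthonormal eigenbasis `bᵢ` with eigenvalues `μᵢ > 0` and let `H` act on
`bᵢ` by `log μᵢ`; then `exp H = h` on the basis. Since `h` is an automorphism, `⁅bᵢ, bⱼ⁆` is a
`μᵢ μⱼ`-eigenvector of `h`, so `H` multiplies it by `log μᵢ + log μⱼ`: this is the Leibniz rule
on basis vectors.
-/

open InnerProductSpace

theorem ContinuousLinearMap.exp_apply_of_apply_eq_smul {𝕜 E : Type*} [RCLike 𝕜]
    [NormedAddCommGroup E] [NormedSpace 𝕜 E] [CompleteSpace E] {T : E →L[𝕜] E} {c : 𝕜} {v : E}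
    (hv : T v = c • v) : NormedSpace.exp T v = NormedSpace.exp c • v := by
  have hpow : ∀ n : ℕ, (T ^ n) v = c ^ n • v := by
    intro n
    induction n with
    | zero => simp
    | succ n ih => rw [pow_succ', mul_apply_eq_comp, ih, map_smul, hv, smul_smul, pow_succ]
  have hT := (NormedSpace.exp_series_hasSum_exp' (𝕂 := 𝕜) T).mapL (apply 𝕜 E v)
  have hc := (NormedSpace.exp_series_hasSum_exp' (𝕂 := 𝕜) c).smul_const v
  refine hT.unique (hc.congr_fun fun n => ?_)
  simp [hpow, smul_smul]

namespace LinearMap.IsSymmetric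

variable {𝕜 E : Type*} [RCLike 𝕜] [NormedAddCommGroup E] [InnerProductSpace 𝕜 E]
  [FiniteDimensional 𝕜 E] {T : E →ₗ[𝕜] E}

noncomputable def cfc (hT : T.IsSymmetric) (f : ℝ → ℝ) : E →L[𝕜] E :=
  ∑ i, (f (hT.eigenvalues rfl i) : 𝕜) •
    rankOne 𝕜 (hT.eigenvectorBasis rfl i) (hT.eigenvectorBasis rfl i)

variable (hT : T.IsSymmetric) (f : ℝ → ℝ)

theorem cfc_apply (x : E) :
    hT.cfc f x = ∑ i, (f (hT.eigenvalues rfl i) : 𝕜) •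
      ⟪hT.eigenvectorBasis rfl i, x⟫_𝕜 • hT.eigenvectorBasis rfl i := by
  simp [cfc]

theorem isSymmetric_cfc : (hT.cfc f : E →ₗ[𝕜] E).IsSymmetric := by
  rw [cfc, ContinuousLinearMap.toLinearMap_sum]
  exact isSymmetric_sum _ fun i _ => (isSymmetric_rankOne_self _).smul (RCLike.conj_ofReal _)

theorem cfc_apply_of_apply_eq_smul {c : ℝ} {v : E} (hv : T v = (c : 𝕜) • v) :
    hT.cfc f v = (f c : 𝕜) • v := by
  set b := hT.eigenvectorBasis rfl
  have hcoeff : ∀ i, (f (hT.eigenvalues rfl i) : 𝕜) • ⟪b i, v⟫_𝕜 • b i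
      = (f c : 𝕜) • ⟪b i, v⟫_𝕜 • b i := by
    intro i
    by_cases hi : ⟪b i, v⟫_𝕜 = 0
    · simp [hi]
    have : (hT.eigenvalues rfl i : 𝕜) * ⟪b i, v⟫_𝕜 = c * ⟪b i, v⟫_𝕜 := by
      have := hT (b i) v
      rwa [apply_eigenvectorBasis, hv, inner_smul_real_left, inner_smul_right,
        RCLike.real_smul_eq_coe_mul] at this
    rw [RCLike.ofReal_inj.mp (mul_right_cancel₀ hi this)]
  rw [cfc_apply, Finset.sum_congr rfl fun i _ => hcoeff i, ← Finset.smul_sum, b.sum_repr']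

theorem cfc_apply_eigenvectorBasis (i : Fin (Module.finrank 𝕜 E)) :
    hT.cfc f (hT.eigenvectorBasis rfl i) =
      (f (hT.eigenvalues rfl i) : 𝕜) • hT.eigenvectorBasis rfl i :=
  hT.cfc_apply_of_apply_eq_smul f (hT.apply_eigenvectorBasis rfl i)

theorem eigenvalues_pos (hpos : ∀ x, x ≠ 0 → 0 < RCLike.re ⟪T x, x⟫_𝕜)
    (i : Fin (Module.finrank 𝕜 E)) : 0 < hT.eigenvalues rfl i := by
  simpa only [hT.apply_eigenvectorBasis, inner_smul_real_left, RCLike.smul_re,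
    inner_self_eq_norm_sq, OrthonormalBasis.norm_eq_one, one_pow, mul_one]
    using hpos _ ((hT.eigenvectorBasis rfl).orthonormal.ne_zero i)

variable {hT}

theorem exp_cfc_log (hpos : ∀ i, 0 < hT.eigenvalues rfl i) :
    ((NormedSpace.exp (hT.cfc Real.log) : E →L[𝕜] E) : E →ₗ[𝕜] E) = T := by
  have := FiniteDimensional.complete 𝕜 E
  refine (hT.eigenvectorBasis rfl).toBasis.ext fun i => ?_
  rw [OrthonormalBasis.coe_toBasis, ContinuousLinearMap.coe_coe,
    ContinuousLinearMap.exp_apply_of_apply_eq_smul (hT.cfc_apply_eigenvectorBasis _ i),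
    ← RCLike.algebraMap_eq_ofReal, ← NormedSpace.algebraMap_exp_comm, ← Real.exp_eq_exp_ℝ,
    Real.exp_log (hpos i), RCLike.algebraMap_eq_ofReal, apply_eigenvectorBasis]

theorem cfc_log_leibniz (hpos : ∀ i, 0 < hT.eigenvalues rfl i) (B : E →ₗ[𝕜] E →ₗ[𝕜] E)
    (hB : ∀ x y, T (B x y) = B (T x) (T y)) (x y : E) :
    hT.cfc Real.log (B x y) = B (hT.cfc Real.log x) y + B x (hT.cfc Real.log y) := by
  set b := hT.eigenvectorBasis rfl
  set D : E →ₗ[𝕜] E := (hT.cfc Real.log).toLinearMap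
  have hbasis : ∀ i j, D (B (b i) (b j)) = B (D (b i)) (b j) + B (b i) (D (b j)) := by
    intro i j
    have hprod : T (B (b i) (b j)) =
        ((hT.eigenvalues rfl i * hT.eigenvalues rfl j : ℝ) : 𝕜) • B (b i) (b j) := by
      rw [hB, apply_eigenvectorBasis, apply_eigenvectorBasis, map_smul, LinearMap.map_smul₂,
        smul_smul, RCLike.ofReal_mul, mul_comm]
    simp only [D, ContinuousLinearMap.coe_coe, b, cfc_apply_of_apply_eq_smul _ _ hprod,
      cfc_apply_eigenvectorBasis, map_smul, LinearMap.smul_apply,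
      Real.log_mul (hpos i).ne' (hpos j).ne', RCLike.ofReal_add, add_smul]
  have hD : B.compr₂ D = B.comp D + B.compl₂ D :=
    LinearMap.ext_basis b.toBasis b.toBasis fun i j => by simpa using hbasis i j
  simpa [D] using LinearMap.congr_fun₂ hD x y

end LinearMap.IsSymmetric

theorem exists_selfAdjoint_derivation_exp_eq_of_pos_selfAdjoint_aut_general
    {g : Type*} [NormedAddCommGroup g] [InnerProductSpace ℂ g] [FiniteDimensional ℂ g]
    (br : g →ₗ[ℂ] g →ₗ[ℂ] g)
    (h : g →L[ℂ] g)
    (haut : ∀ x y : g, h (br x y) = br (h x) (h y))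
    (hsa : ∀ x y : g, ⟪h x, y⟫ = ⟪x, h y⟫)
    (hpos : ∀ x : g, x ≠ 0 → 0 < (⟪h x, x⟫).re) :
    ∃ H : g →L[ℂ] g,
      (∀ x y : g, ⟪H x, y⟫ = ⟪x, H y⟫) ∧
      (∀ x y : g, H (br x y) = br (H x) y + br x (H y)) ∧
      NormedSpace.exp H = h := by
  have hT : (h : g →ₗ[ℂ] g).IsSymmetric := hsa
  have hμ := hT.eigenvalues_pos hpos
  exact ⟨hT.cfc Real.log, hT.isSymmetric_cfc Real.log,
    LinearMap.IsSymmetric.cfc_log_leibniz hμ br haut,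
    ContinuousLinearMap.coe_injective (LinearMap.IsSymmetric.exp_cfc_log hμ)⟩

/-- A positive self-adjoint automorphism `h` of a finite-dimensional complex Lie algebra
(with an inner product) is the exponential of a self-adjoint derivation `H`. -/
theorem exists_selfAdjoint_derivation_exp_eq_of_pos_selfAdjoint_aut
    {g : Type*} [NormedAddCommGroup g] [InnerProductSpace ℂ g] [FiniteDimensional ℂ g]
    (br : g →ₗ[ℂ] g →ₗ[ℂ] g)
    (hskew : ∀ x y : g, br x y = - br y x)
    (hjacobi : ∀ x y z : g, br x (br y z) = br (br x y) z + br y (br x z))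
    (h : g →L[ℂ] g)
    (hbij : Function.Bijective h)
    (haut : ∀ x y : g, h (br x y) = br (h x) (h y))
    (hsa : ∀ x y : g, ⟪h x, y⟫ = ⟪x, h y⟫)
    (hpos : ∀ x : g, x ≠ 0 → 0 < (⟪h x, x⟫).re) :
    ∃ H : g →L[ℂ] g,
      (∀ x y : g, ⟪H x, y⟫ = ⟪x, H y⟫) ∧
      (∀ x y : g, H (br x y) = br (H x) y + br x (H y)) ∧
      NormedSpace.exp H = h :=
  exists_selfAdjoint_derivation_exp_eq_of_pos_selfAdjoint_aut_general br h haut hsa hpos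
end

section
/- Let n ≥ 1 and let α, β : ℝ → M_n(ℂ) be matrix-valued functions such that α is differentiable and satisfies the Lax equation α′(t) = α(t)β(t) − β(t)α(t) for every t ∈ ℝ. Then the characteristic polynomial of α(t) is independent of t: for all t ∈ ℝ, charpoly(α(t)) = charpoly(α(0)). (Hence the spectral curve det(η − α(t)) = 0 is independent of t.) -/
/-!
By Jacobi's formula, along a solution of `M' = MB - BM` the determinant has derivative
`tr (adj M · (MB - BM)) = tr (det M · B) - tr (M · adj M · B) = 0`, using `adj M · M = M · adj M`
and cyclicity of the trace. Since `zI - M` solves the same Lax equation for every scalar `z`,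
each value `det (zI - M t)` of the characteristic polynomial is constant in `t`.
-/

namespace Matrix

variable {n R : Type*} [Fintype n] [DecidableEq n] [CommRing R]

theorem trace_adjugate_mul_eq_sum_det_updateCol (A B : Matrix n n R) :
    (adjugate A * B).trace = ∑ i, (A.updateCol i fun k => B k i).det := by
  simp_rw [← cramer_apply, cramer_eq_adjugate_mulVec]
  simp [trace, diag, mul_apply, mulVec, dotProduct]

theorem trace_adjugate_mul_commutator (A B : Matrix n n R) :
    (adjugate A * (A * B - B * A)).trace = 0 := by
  rw [mul_sub, ← mul_assoc, ← mul_assoc, adjugate_mul, trace_sub, trace_mul_cycle, mul_adjugate,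
    sub_self]

end Matrix

open Matrix

variable {𝕜 R n : Type*} [Fintype n] [DecidableEq n]

theorem HasDerivAt.matrix_det [NontriviallyNormedField 𝕜] [NormedCommRing R] [NormedAlgebra 𝕜 R]
    {M : 𝕜 → Matrix n n R} {M' : Matrix n n R} {t : 𝕜}
    (hM : ∀ i j, HasDerivAt (fun s => M s i j) (M' i j) t) :
    HasDerivAt (fun s => (M s).det) (adjugate (M t) * M').trace t := by
  have hexpand : HasDerivAt (fun s => (M s).det)
      (∑ σ : Equiv.Perm n, (Equiv.Perm.sign σ : R) *
        ∑ i, (∏ j ∈ Finset.univ.erase i, M t (σ j) j) • M' (σ i) i) t := by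
    simp_rw [det_apply']
    exact HasDerivAt.fun_sum fun σ _ =>
      (HasDerivAt.fun_finsetProd fun i _ => hM (σ i) i).const_mul _
  convert hexpand using 1
  simp_rw [trace_adjugate_mul_eq_sum_det_updateCol, det_apply', Finset.mul_sum]
  rw [Finset.sum_comm]
  refine Finset.sum_congr rfl fun σ _ => Finset.sum_congr rfl fun i _ => ?_
  rw [← Finset.prod_erase_mul _ _ (Finset.mem_univ i), updateCol_self, smul_eq_mul]
  congr 2
  exact Finset.prod_congr rfl fun j hj => updateCol_ne (Finset.ne_of_mem_erase hj)

def IsLaxPair [NontriviallyNormedField 𝕜] [NormedCommRing R] [NormedAlgebra 𝕜 R]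
    (M B : 𝕜 → Matrix n n R) : Prop :=
  ∀ t i j, HasDerivAt (fun s => M s i j) ((M t * B t - B t * M t) i j) t

namespace IsLaxPair

section NontriviallyNormedField

variable [NontriviallyNormedField 𝕜] [NormedCommRing R] [NormedAlgebra 𝕜 R]
  {M B : 𝕜 → Matrix n n R}

theorem scalar_sub (hM : IsLaxPair M B) (z : R) : IsLaxPair (fun t => scalar n z - M t) B := by
  intro t i j
  have hcomm : (scalar n z - M t) * B t - B t * (scalar n z - M t) =
      -(M t * B t - B t * M t) := by
    simp only [sub_mul, mul_sub, (scalar_commute z (Commute.all z) (B t)).eq]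
    abel
  rw [hcomm]
  exact (hM t i j).const_sub (scalar n z i j)

theorem hasDerivAt_det (hM : IsLaxPair M B) (t : 𝕜) : HasDerivAt (fun s => (M s).det) 0 t := by
  simpa only [trace_adjugate_mul_commutator] using HasDerivAt.matrix_det (hM t)

end NontriviallyNormedField

variable [RCLike 𝕜] {M B : 𝕜 → Matrix n n R}

theorem det_eq [NormedCommRing R] [NormedAlgebra 𝕜 R] (hM : IsLaxPair M B) (s t : 𝕜) :
    (M s).det = (M t).det :=
  is_const_of_deriv_eq_zero (fun u => (hM.hasDerivAt_det u).differentiableAt)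
    (fun u => (hM.hasDerivAt_det u).deriv) s t

theorem charpoly_eq [NormedField R] [NormedAlgebra 𝕜 R] (hM : IsLaxPair M B) (s t : 𝕜) :
    (M s).charpoly = (M t).charpoly := by
  have : Infinite R := .of_injective _ (algebraMap 𝕜 R).injective
  refine Polynomial.funext fun z => ?_
  simpa only [eval_charpoly] using (hM.scalar_sub z).det_eq s t

end IsLaxPair

theorem charpoly_const_of_lax_general
    {n : ℕ}
    (α β : ℝ → Matrix (Fin n) (Fin n) ℂ)
    (hlax : ∀ (t : ℝ) (i j : Fin n),
      HasDerivAt (fun s => α s i j) ((α t * β t - β t * α t) i j) t) :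
    ∀ t : ℝ, (α t).charpoly = (α 0).charpoly :=
  fun t => IsLaxPair.charpoly_eq (B := β) hlax t 0

/-- If a differentiable family of matrices `α : ℝ → Mₙ(ℂ)` satisfies the Lax equation
`α′ = αβ − βα`, then the characteristic polynomial of `α t` is independent of `t`. -/
theorem charpoly_const_of_lax
    {n : ℕ} (hn : 1 ≤ n)
    (α β : ℝ → Matrix (Fin n) (Fin n) ℂ)
    (hlax : ∀ (t : ℝ) (i j : Fin n),
      HasDerivAt (fun s => α s i j) ((α t * β t - β t * α t) i j) t) :
    ∀ t : ℝ, (α t).charpoly = (α 0).charpoly :=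
  charpoly_const_of_lax_general α β hlax
end

section
/- Let n ≥ 1 and let A, φ₁, φ₂ : ℝ → M_n(ℂ) be differentiable matrix-valued functions satisfying Schmid's equations: A′(t) = [φ₁(t), φ₂(t)], φ₁′(t) = [A(t), φ₂(t)], φ₂′(t) = [φ₁(t), A(t)] for all t, where [X,Y] = XY − YX. Fix ζ ∈ ℂ and define α(t) = (φ₁(t) + i φ₂(t)) + 2ζ A(t) + ζ² (φ₁(t) − i φ₂(t)) and β(t) = i A(t) + i ζ (φ₁(t) − i φ₂(t)). Then α satisfies the Lax equation α′(t) = [α(t), β(t)] for all t ∈ ℝ. -/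
/-!
Write `ψ = φ₁ + iφ₂` and `ψ̄ = φ₁ − iφ₂`. Schmid's equations become `ψ′ = [ψ, iA]`,
`ψ̄′ = [iA, ψ̄]` and `2A′ = i[ψ, ψ̄]`, while `α = ψ + 2ζA + ζ²ψ̄` and `β = iA + iζψ̄`.
Expanding `[α, β]` by bilinearity (the terms `[A, A]`, `[ψ̄, ψ̄]` vanish), its coefficients of
`1, ζ, ζ²` are exactly these three right-hand sides, so `[α, β] = ψ′ + 2ζA′ + ζ²ψ̄′ = α′`.
-/

/-- The Lax matrix `α(ζ) = (φ₁ + iφ₂) + 2ζA + ζ²(φ₁ − iφ₂)` built from a solution of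
Schmid's equations. -/
noncomputable def schmidLaxAlpha {n : ℕ} (ζ : ℂ)
    (A φ₁ φ₂ : ℝ → Matrix (Fin n) (Fin n) ℂ) (t : ℝ) : Matrix (Fin n) (Fin n) ℂ :=
  (φ₁ t + Complex.I • φ₂ t) + (2 * ζ) • A t + ζ ^ 2 • (φ₁ t - Complex.I • φ₂ t)

/-- The matrix `β(ζ) = iA + iζ(φ₁ − iφ₂)` built from a solution of Schmid's equations. -/
noncomputable def schmidLaxBeta {n : ℕ} (ζ : ℂ)
    (A φ₁ φ₂ : ℝ → Matrix (Fin n) (Fin n) ℂ) (t : ℝ) : Matrix (Fin n) (Fin n) ℂ :=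
  Complex.I • A t + (Complex.I * ζ) • (φ₁ t - Complex.I • φ₂ t)

open scoped Matrix.Norms.Elementwise

theorem Matrix.hasDerivAt_iff_entrywise {𝕜 E m n : Type*} [NontriviallyNormedField 𝕜]
    [NormedAddCommGroup E] [NormedSpace 𝕜 E] [Fintype m] [Fintype n]
    {f : 𝕜 → Matrix m n E} {f' : Matrix m n E} {x : 𝕜} :
    HasDerivAt f f' x ↔ ∀ i j, HasDerivAt (fun s => f s i j) (f' i j) x :=
  hasDerivAt_pi.trans (forall_congr' fun _ => hasDerivAt_pi)

theorem lax_commutator_eq {R M : Type*} [CommRing R] [Ring M] [Algebra R M]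
    {i : R} (hi : i * i = -1) (ζ : R) (A P Q : M) :
    ((P + i • Q) + (2 * ζ) • A + ζ ^ 2 • (P - i • Q)) * (i • A + (i * ζ) • (P - i • Q)) -
      (i • A + (i * ζ) • (P - i • Q)) * ((P + i • Q) + (2 * ζ) • A + ζ ^ 2 • (P - i • Q)) =
      ((A * Q - Q * A) + i • (P * A - A * P)) + (2 * ζ) • (P * Q - Q * P) +
        ζ ^ 2 • ((A * Q - Q * A) - i • (P * A - A * P)) := by
  simp only [mul_add, add_mul, sub_mul, mul_sub, smul_mul_assoc, mul_smul_comm,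
    smul_smul, smul_add, smul_sub]
  -- the two sides differ by `(i * i + 1)` times the following element
  linear_combination (norm := module)
    hi • ((Q * A - A * Q) - (2 * ζ) • (P * Q - Q * P) - ζ ^ 2 • (A * Q - Q * A))

theorem schmid_to_lax_general
    {n : ℕ} (ζ : ℂ)
    (A φ₁ φ₂ : ℝ → Matrix (Fin n) (Fin n) ℂ)
    (hA : ∀ (t : ℝ) (i j : Fin n),
      HasDerivAt (fun s => A s i j) ((φ₁ t * φ₂ t - φ₂ t * φ₁ t) i j) t)
    (hφ₁ : ∀ (t : ℝ) (i j : Fin n),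
      HasDerivAt (fun s => φ₁ s i j) ((A t * φ₂ t - φ₂ t * A t) i j) t)
    (hφ₂ : ∀ (t : ℝ) (i j : Fin n),
      HasDerivAt (fun s => φ₂ s i j) ((φ₁ t * A t - A t * φ₁ t) i j) t) :
    ∀ (t : ℝ) (i j : Fin n),
      HasDerivAt (fun s => schmidLaxAlpha ζ A φ₁ φ₂ s i j)
        ((schmidLaxAlpha ζ A φ₁ φ₂ t * schmidLaxBeta ζ A φ₁ φ₂ t -
          schmidLaxBeta ζ A φ₁ φ₂ t * schmidLaxAlpha ζ A φ₁ φ₂ t) i j) t := by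
  intro t
  refine Matrix.hasDerivAt_iff_entrywise.mp ?_
  have dA := Matrix.hasDerivAt_iff_entrywise.mpr (hA t)
  have dφ₁ := Matrix.hasDerivAt_iff_entrywise.mpr (hφ₁ t)
  have dφ₂ := Matrix.hasDerivAt_iff_entrywise.mpr (hφ₂ t)
  rw [schmidLaxAlpha, schmidLaxBeta, lax_commutator_eq Complex.I_mul_I]
  exact ((dφ₁.add (dφ₂.const_smul Complex.I)).add (dA.const_smul (2 * ζ))).add
    ((dφ₁.sub (dφ₂.const_smul Complex.I)).const_smul (ζ ^ 2))

/-- If `A, φ₁, φ₂ : ℝ → Mₙ(ℂ)` satisfy Schmid's equations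
`A′ = [φ₁, φ₂]`, `φ₁′ = [A, φ₂]`, `φ₂′ = [φ₁, A]`, then for any spectral parameter `ζ ∈ ℂ`
the matrix `α = (φ₁ + iφ₂) + 2ζA + ζ²(φ₁ − iφ₂)` satisfies the Lax equation `α′ = [α, β]`
with `β = iA + iζ(φ₁ − iφ₂)`. -/
theorem schmid_to_lax
    {n : ℕ} (hn : 1 ≤ n) (ζ : ℂ)
    (A φ₁ φ₂ : ℝ → Matrix (Fin n) (Fin n) ℂ)
    (hA : ∀ (t : ℝ) (i j : Fin n),
      HasDerivAt (fun s => A s i j) ((φ₁ t * φ₂ t - φ₂ t * φ₁ t) i j) t)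
    (hφ₁ : ∀ (t : ℝ) (i j : Fin n),
      HasDerivAt (fun s => φ₁ s i j) ((A t * φ₂ t - φ₂ t * A t) i j) t)
    (hφ₂ : ∀ (t : ℝ) (i j : Fin n),
      HasDerivAt (fun s => φ₂ s i j) ((φ₁ t * A t - A t * φ₁ t) i j) t) :
    ∀ (t : ℝ) (i j : Fin n),
      HasDerivAt (fun s => schmidLaxAlpha ζ A φ₁ φ₂ s i j)
        ((schmidLaxAlpha ζ A φ₁ φ₂ t * schmidLaxBeta ζ A φ₁ φ₂ t -
          schmidLaxBeta ζ A φ₁ φ₂ t * schmidLaxAlpha ζ A φ₁ φ₂ t) i j) t :=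
  schmid_to_lax_general ζ A φ₁ φ₂ hA hφ₁ hφ₂
end

section
/- Let ω₁, ω₂, ω₃ be the standard self-dual 2-forms on ℝ⁴, namely ω₁ = e¹∧e² + e³∧e⁴, ω₂ = e¹∧e³ − e²∧e⁴, ω₃ = −e¹∧e⁴ − e²∧e³, regarded as alternating bilinear forms on ℝ⁴. Suppose θ₁, θ₂, θ₃ are linearly independent elements of the linear span of {ω₁, ω₂, ω₃}, and A₁, A₂, A₃ ∈ ℝ⁴ are vectors such that for all i, j ∈ {1,2,3} and all v ∈ ℝ⁴ one has θ_j(A_i, v) = θ_i(A_j, v). Then A₁ = A₂ = A₃ = 0. -/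
/-!
Identify `ℝ⁴` with `ℍ`. The form `c₀ω₁ + c₁ω₂ + c₂ω₃`, acting by `v ↦ v ᵥ* ω`, becomes left
multiplication by the imaginary quaternion `q = c₀i + c₁j − c₂k`, so the hypothesis reads
`q_j a_i = q_i a_j` for quaternions `a_i`. Since `q₀² = −|q₀|²` is real, hence central, these
relations give `(q₂q₀q₁ − q₁q₀q₂) a₀ = 0`, and `q₂q₀q₁ − q₁q₀q₂` is twice the determinant of the
coefficient vectors, nonzero by independence. Hence `a₀ = 0`, and then `q₀ a_i = q_i a₀ = 0` with
`q₀ ≠ 0` gives `a_i = 0`.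
-/

open Matrix

/-- The standard self-dual 2-form `ω₁ = e¹∧e² + e³∧e⁴` on `ℝ⁴`, as the antisymmetric matrix
of the bilinear form `(u,v) ↦ u ⬝ᵥ ω₁ *ᵥ v`. -/
def selfDualOmega1 : Matrix (Fin 4) (Fin 4) ℝ :=
  !![0, 1, 0, 0; -1, 0, 0, 0; 0, 0, 0, 1; 0, 0, -1, 0]

/-- The standard self-dual 2-form `ω₂ = e¹∧e³ − e²∧e⁴` on `ℝ⁴`. -/
def selfDualOmega2 : Matrix (Fin 4) (Fin 4) ℝ :=
  !![0, 0, 1, 0; 0, 0, 0, -1; -1, 0, 0, 0; 0, 1, 0, 0]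

/-- The standard self-dual 2-form `ω₃ = −e¹∧e⁴ − e²∧e³` on `ℝ⁴`. -/
def selfDualOmega3 : Matrix (Fin 4) (Fin 4) ℝ :=
  !![0, 0, 0, -1; 0, 0, -1, 0; 0, 1, 0, 0; 1, 0, 0, 0]

open scoped Quaternion

theorem triple_sub_mul_eq_zero_of_mul_symm {R : Type*} [Ring R] {q a : Fin 3 → R}
    (h : ∀ i j, q j * a i = q i * a j)
    (h₁ : Commute (q 0 * q 0) (q 1)) (h₂ : Commute (q 0 * q 0) (q 2)) :
    (q 2 * q 0 * q 1 - q 1 * q 0 * q 2) * a 0 = 0 := by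
  rw [sub_mul, sub_eq_zero]
  calc q 2 * q 0 * q 1 * a 0
      = q 2 * (q 0 * q 0) * a 1 := by simp only [mul_assoc, h 0 1]
    _ = q 0 * q 0 * (q 1 * a 2) := by rw [h₂.symm.eq, mul_assoc, h 1 2]
    _ = q 1 * q 0 * q 2 * a 0 := by simp only [← mul_assoc, h₁.eq]; simp only [mul_assoc, h 0 2]

def imQuaternion (c : Fin 3 → ℝ) : ℍ[ℝ] := ⟨0, c 0, c 1, -c 2⟩

theorem imQuaternion_eq_zero {c : Fin 3 → ℝ} : imQuaternion c = 0 ↔ c = 0 := by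
  rw [Quaternion.ext_iff]
  simp [imQuaternion, funext_iff, Fin.forall_fin_succ]

theorem imQuaternion_mul_self (c : Fin 3 → ℝ) :
    imQuaternion c * imQuaternion c = -((Quaternion.normSq (imQuaternion c) : ℝ) : ℍ[ℝ]) := by
  rw [← Quaternion.self_mul_star, Quaternion.star_eq_neg.2 rfl, mul_neg, neg_neg]

theorem imQuaternion_triple_sub (c : Fin 3 → Fin 3 → ℝ) :
    imQuaternion (c 2) * imQuaternion (c 0) * imQuaternion (c 1)
        - imQuaternion (c 1) * imQuaternion (c 0) * imQuaternion (c 2)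
      = ((2 * (Matrix.of c).det : ℝ) : ℍ[ℝ]) := by
  ext <;> simp only [Quaternion.re_sub, Quaternion.imI_sub, Quaternion.imJ_sub,
      Quaternion.imK_sub, Quaternion.re_mul, Quaternion.imI_mul, Quaternion.imJ_mul,
      Quaternion.imK_mul] <;>
    simp [imQuaternion, det_fin_three] <;> ring

theorem eq_zero_of_imQuaternion_mul_symm {c : Fin 3 → Fin 3 → ℝ} (hc : LinearIndependent ℝ c)
    {a : Fin 3 → ℍ[ℝ]} (h : ∀ i j, imQuaternion (c j) * a i = imQuaternion (c i) * a j) :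
    a = 0 := by
  have hcomm (x : ℍ[ℝ]) : Commute (imQuaternion (c 0) * imQuaternion (c 0)) x := by
    rw [imQuaternion_mul_self]
    exact Commute.neg_left (Quaternion.coe_commutes _ x)
  have hdet : (Matrix.of c).det ≠ 0 :=
    ((isUnit_iff_isUnit_det _).1 (linearIndependent_rows_iff_isUnit.1 hc)).ne_zero
  have ha₀ : a 0 = 0 := by
    have h₀ := triple_sub_mul_eq_zero_of_mul_symm h (hcomm _) (hcomm _)
    rw [imQuaternion_triple_sub] at h₀
    refine (mul_eq_zero.1 h₀).resolve_left ?_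
    rw [← Quaternion.coe_zero]
    exact Quaternion.coe_injective.ne (mul_ne_zero two_ne_zero hdet)
  have hq₀ : imQuaternion (c 0) ≠ 0 := imQuaternion_eq_zero.not.2 (hc.ne_zero 0)
  funext i
  have hi := h i 0
  rw [ha₀, mul_zero] at hi
  exact (mul_eq_zero.1 hi).resolve_left hq₀

noncomputable def selfDualForm : (Fin 3 → ℝ) →ₗ[ℝ] Matrix (Fin 4) (Fin 4) ℝ :=
  Fintype.linearCombination ℝ ![selfDualOmega1, selfDualOmega2, selfDualOmega3]

theorem range_selfDualForm : LinearMap.range selfDualForm =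
    Submodule.span ℝ {selfDualOmega1, selfDualOmega2, selfDualOmega3} := by
  rw [selfDualForm, Fintype.range_linearCombination, range_cons, range_cons_cons_empty,
    Set.singleton_union]

noncomputable def toQuaternion : (Fin 4 → ℝ) ≃ₗ[ℝ] ℍ[ℝ] :=
  (QuaternionAlgebra.linearEquivTuple _ _ _).symm

theorem toQuaternion_apply (A : Fin 4 → ℝ) : toQuaternion A = ⟨A 0, A 1, A 2, A 3⟩ := rfl

theorem toQuaternion_vecMul_selfDualForm (A : Fin 4 → ℝ) (c : Fin 3 → ℝ) :
    toQuaternion (A ᵥ* selfDualForm c) = imQuaternion c * toQuaternion A := by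
  ext <;> simp only [Quaternion.re_mul, Quaternion.imI_mul, Quaternion.imJ_mul,
      Quaternion.imK_mul] <;>
    simp [toQuaternion_apply, imQuaternion, selfDualForm, Fintype.linearCombination_apply,
      Fin.sum_univ_three, selfDualOmega1, selfDualOmega2, selfDualOmega3, vecHead, vecTail] <;>
    ring

/-- If `θ₁, θ₂, θ₃` are linearly independent elements of the span of the standard self-dual
2-forms on `ℝ⁴` and `A₁, A₂, A₃ ∈ ℝ⁴` satisfy `ι_{A_i}θ_j = ι_{A_j}θ_i` for all `i, j`,
then `A₁ = A₂ = A₃ = 0`. -/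
theorem eq_zero_of_contraction_symm_selfDual
    (θ : Fin 3 → Matrix (Fin 4) (Fin 4) ℝ)
    (hspan : ∀ i, θ i ∈ Submodule.span ℝ
      ({selfDualOmega1, selfDualOmega2, selfDualOmega3} : Set (Matrix (Fin 4) (Fin 4) ℝ)))
    (hindep : LinearIndependent ℝ θ)
    (A : Fin 3 → (Fin 4 → ℝ))
    (hsym : ∀ (i j : Fin 3) (v : Fin 4 → ℝ),
      A i ⬝ᵥ (θ j).mulVec v = A j ⬝ᵥ (θ i).mulVec v) :
    ∀ i, A i = 0 := by
  choose c hc using fun i => LinearMap.mem_range.1 (range_selfDualForm ▸ hspan i)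
  have hθ : selfDualForm ∘ c = θ := funext hc
  have hvecMul (i j : Fin 3) : A i ᵥ* θ j = A j ᵥ* θ i :=
    dotProduct_eq _ _ fun v => by simpa only [dotProduct_mulVec] using hsym i j v
  have ha := eq_zero_of_imQuaternion_mul_symm ((hθ ▸ hindep).of_comp selfDualForm)
    (a := fun i => toQuaternion (A i)) fun i j => by
      simp only [← toQuaternion_vecMul_selfDualForm, hc, hvecMul i j]
  intro i
  simpa using congrFun ha i
end

section
/- With coordinates (x, y, z, p, q) on ℝ⁵ and F : ℝ⁵ → ℝ smooth, define the vector fields D := ∂_x + p∂_y + F∂_z + q∂_p, i.e. D(u) = (1, p, F(u), q, 0) at u = (x,y,z,p,q), and ∂_q, the constant field (0,0,0,0,1), and set E := [∂_q, D]. Then for each point u ∈ ℝ⁵ the five vectors D(u), ∂_q(u), E(u), [∂_q, E](u), [D, E](u) span ℝ⁵ if and only if ∂²F/∂q²(u) ≠ 0. (Thus the 2-plane distribution spanned by D and ∂_q is generic exactly where F_{qq} is nonvanishing.) -/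
/-- The total derivative vector field `D = ∂_x + p∂_y + F∂_z + q∂_p` on the jet space `ℝ⁵`
with coordinates `(x, y, z, p, q)`, encoding the ODE `z′ = F(x, y, y′, y″, z)`. -/
noncomputable def jetD (F : (Fin 5 → ℝ) → ℝ) (u : Fin 5 → ℝ) : Fin 5 → ℝ :=
  ![1, u 3, F u, u 4, 0]

/-- The constant coordinate vector field `∂_q` on `ℝ⁵` with coordinates `(x, y, z, p, q)`. -/
def jetDq (_u : Fin 5 → ℝ) : Fin 5 → ℝ :=
  ![0, 0, 0, 0, 1]

/-- The Lie bracket of vector fields on `ℝ⁵`, viewed as smooth maps `ℝ⁵ → ℝ⁵`: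
`[V, W](u) = DW(u)(V(u)) − DV(u)(W(u))`. -/
noncomputable def jetBracket (V W : (Fin 5 → ℝ) → (Fin 5 → ℝ)) (u : Fin 5 → ℝ) : Fin 5 → ℝ :=
  fderiv ℝ W u (V u) - fderiv ℝ V u (W u)

/-- The derivative of `jetD F` at `u`, componentwise. -/
theorem jetD_hasFDerivAt (F : (Fin 5 → ℝ) → ℝ) (hF : ContDiff ℝ (⊤ : ℕ∞) F) (u : Fin 5 → ℝ) :
    HasFDerivAt (jetD F)
      (ContinuousLinearMap.pi
        ![0, ContinuousLinearMap.proj 3, fderiv ℝ F u, ContinuousLinearMap.proj 4, 0]) u := by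
  rw [hasFDerivAt_pi']
  intro i
  fin_cases i <;>
    simp only [jetD, ContinuousLinearMap.proj_pi, Matrix.cons_val_zero, Matrix.cons_val_one,
      Matrix.head_cons, Matrix.cons_val_two, Matrix.tail_cons, Matrix.cons_val_three,
      Matrix.cons_val_four, Fin.isValue]
  · exact hasFDerivAt_const 1 u
  · exact hasFDerivAt_apply 3 u
  · exact (hF.differentiable (by simp) u).hasFDerivAt
  · exact hasFDerivAt_apply 4 u
  · exact hasFDerivAt_const 0 u

/-- The first bracket `E = [∂_q, D] = F_q ∂_z + ∂_p`. -/
theorem jetE_eq (F : (Fin 5 → ℝ) → ℝ) (hF : ContDiff ℝ (⊤ : ℕ∞) F) (u : Fin 5 → ℝ) :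
    jetBracket jetDq (jetD F) u = ![0, 0, fderiv ℝ F u ![0, 0, 0, 0, 1], 1, 0] := by
  have h1 : fderiv ℝ jetDq u = 0 := fderiv_const_apply _
  rw [jetBracket, (jetD_hasFDerivAt F hF u).fderiv, h1]
  funext i
  fin_cases i <;>
    simp [jetDq, ContinuousLinearMap.pi_apply]

/-- `F_q` is smooth. -/
theorem jetFq_smooth (F : (Fin 5 → ℝ) → ℝ) (hF : ContDiff ℝ (⊤ : ℕ∞) F) :
    ContDiff ℝ (⊤ : ℕ∞) (fun v => fderiv ℝ F v ![0, 0, 0, 0, 1]) :=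
  (hF.fderiv_right (by simp)).clm_apply contDiff_const

/-- The derivative of `E = [∂_q, D]` at `u`, componentwise. -/
theorem jetE_hasFDerivAt (F : (Fin 5 → ℝ) → ℝ) (hF : ContDiff ℝ (⊤ : ℕ∞) F) (u : Fin 5 → ℝ) :
    HasFDerivAt (jetBracket jetDq (jetD F))
      (ContinuousLinearMap.pi
        ![0, 0, fderiv ℝ (fun v => fderiv ℝ F v ![0, 0, 0, 0, 1]) u, 0, 0]) u := by
  have hg := ((jetFq_smooth F hF).differentiable (by simp) u).hasFDerivAt
  have heq : jetBracket jetDq (jetD F) =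
      fun v => ![0, 0, fderiv ℝ F v ![0, 0, 0, 0, 1], 1, 0] := funext (jetE_eq F hF)
  rw [heq, hasFDerivAt_pi']
  intro i
  fin_cases i <;>
    simp only [ContinuousLinearMap.proj_pi, Matrix.cons_val_zero, Matrix.cons_val_one,
      Matrix.head_cons, Matrix.cons_val_two, Matrix.tail_cons, Matrix.cons_val_three,
      Matrix.cons_val_four, Fin.isValue]
  · exact hasFDerivAt_const 0 u
  · exact hasFDerivAt_const 0 u
  · exact hg
  · exact hasFDerivAt_const 1 u
  · exact hasFDerivAt_const 0 u

/-- The second bracket `[∂_q, E] = F_qq ∂_z`. -/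
theorem jetB2_eq (F : (Fin 5 → ℝ) → ℝ) (hF : ContDiff ℝ (⊤ : ℕ∞) F) (u : Fin 5 → ℝ) :
    jetBracket jetDq (jetBracket jetDq (jetD F)) u =
      fderiv ℝ (fun v => fderiv ℝ F v ![0, 0, 0, 0, 1]) u ![0, 0, 0, 0, 1] • ![0, 0, 1, 0, 0] := by
  have h1 : fderiv ℝ jetDq u = 0 := fderiv_const_apply _
  rw [jetBracket, (jetE_hasFDerivAt F hF u).fderiv, h1]
  funext i
  fin_cases i <;> simp [jetDq, ContinuousLinearMap.pi_apply]

/-- The third bracket `[D, E] = -∂_y + b ∂_z` for some scalar `b`. -/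
theorem jetB3_eq (F : (Fin 5 → ℝ) → ℝ) (hF : ContDiff ℝ (⊤ : ℕ∞) F) (u : Fin 5 → ℝ) :
    ∃ b : ℝ, jetBracket (jetD F) (jetBracket jetDq (jetD F)) u = ![0, -1, b, 0, 0] := by
  refine ⟨fderiv ℝ (fun v => fderiv ℝ F v ![0, 0, 0, 0, 1]) u (jetD F u) -
    fderiv ℝ F u (jetBracket jetDq (jetD F) u), ?_⟩
  rw [jetBracket, (jetE_hasFDerivAt F hF u).fderiv, (jetD_hasFDerivAt F hF u).fderiv]
  funext i
  fin_cases i <;>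
    simp [jetE_eq F hF u, ContinuousLinearMap.pi_apply]

/-- The purely linear-algebraic core: the five explicit vectors span `ℝ⁵` iff `Fqq ≠ 0`. -/
theorem jet_span_part (F : (Fin 5 → ℝ) → ℝ) (u : Fin 5 → ℝ) (g b Fqq : ℝ) :
    Submodule.span ℝ
        ({![1, u 3, F u, u 4, 0], ![0, 0, 0, 0, 1], ![0, 0, g, 1, 0],
          Fqq • ![0, 0, 1, 0, 0], ![0, -1, b, 0, 0]} : Set (Fin 5 → ℝ)) = ⊤ ↔ Fqq ≠ 0 := by
  constructor
  · intro htop hzero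
    subst hzero
    set φ : (Fin 5 → ℝ) →ₗ[ℝ] ℝ :=
      (g * u 4 - b * u 3 - F u) • LinearMap.proj 0 + b • LinearMap.proj 1 +
        LinearMap.proj 2 + (-g) • LinearMap.proj 3 with hφ
    have hsub : Submodule.span ℝ
        ({![1, u 3, F u, u 4, 0], ![0, 0, 0, 0, 1], ![0, 0, g, 1, 0],
          (0:ℝ) • ![0, 0, 1, 0, 0], ![0, -1, b, 0, 0]} : Set (Fin 5 → ℝ)) ≤ LinearMap.ker φ := by
      rw [Submodule.span_le]
      rintro w hw
      simp only [Set.mem_insert_iff, Set.mem_singleton_iff, zero_smul] at hw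
      rcases hw with rfl | rfl | rfl | rfl | rfl <;>
        · simp only [SetLike.mem_coe, LinearMap.mem_ker, hφ, LinearMap.add_apply,
            LinearMap.smul_apply, LinearMap.proj_apply, smul_eq_mul, Matrix.cons_val_zero,
            Matrix.cons_val_one, Matrix.head_cons, Matrix.cons_val_two, Matrix.tail_cons,
            Matrix.cons_val_three, Pi.zero_apply]
          ring
    have h2 : (![0, 0, 1, 0, 0] : Fin 5 → ℝ) ∈ LinearMap.ker φ := by
      apply hsub
      rw [htop]
      exact Submodule.mem_top
    simp only [LinearMap.mem_ker, hφ, LinearMap.add_apply, LinearMap.smul_apply,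
      LinearMap.proj_apply, smul_eq_mul, Matrix.cons_val_zero, Matrix.cons_val_one,
      Matrix.head_cons, Matrix.cons_val_two, Matrix.tail_cons, Matrix.cons_val_three] at h2
    norm_num at h2
  · intro hne
    rw [eq_top_iff]
    rintro v -
    set S : Set (Fin 5 → ℝ) :=
      {![1, u 3, F u, u 4, 0], ![0, 0, 0, 0, 1], ![0, 0, g, 1, 0],
        Fqq • ![0, 0, 1, 0, 0], ![0, -1, b, 0, 0]} with hS
    have m2 : (![0, 0, 1, 0, 0] : Fin 5 → ℝ) ∈ Submodule.span ℝ S := by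
      have h := Submodule.smul_mem (Submodule.span ℝ S) Fqq⁻¹
        (Submodule.subset_span (show Fqq • ![0, 0, 1, 0, 0] ∈ S by simp [hS]))
      rwa [smul_smul, inv_mul_cancel₀ hne, one_smul] at h
    have m1 : (![0, 1, 0, 0, 0] : Fin 5 → ℝ) ∈ Submodule.span ℝ S := by
      have h := sub_mem (Submodule.smul_mem (Submodule.span ℝ S) b m2)
        (Submodule.subset_span (show ![0, -1, b, 0, 0] ∈ S by simp [hS]))
      convert h using 1
      funext i
      fin_cases i <;> simp
    have m3 : (![0, 0, 0, 1, 0] : Fin 5 → ℝ) ∈ Submodule.span ℝ S := by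
      have h := sub_mem (Submodule.subset_span (show ![0, 0, g, 1, 0] ∈ S by simp [hS]))
        (Submodule.smul_mem (Submodule.span ℝ S) g m2)
      convert h using 1
      funext i
      fin_cases i <;> simp
    have m4 : (![0, 0, 0, 0, 1] : Fin 5 → ℝ) ∈ Submodule.span ℝ S :=
      Submodule.subset_span (by simp [hS])
    have m0 : (![1, 0, 0, 0, 0] : Fin 5 → ℝ) ∈ Submodule.span ℝ S := by
      have h := sub_mem (sub_mem (sub_mem
        (Submodule.subset_span (show ![1, u 3, F u, u 4, 0] ∈ S by simp [hS]))
        (Submodule.smul_mem _ (u 3) m1)) (Submodule.smul_mem _ (F u) m2))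
        (Submodule.smul_mem _ (u 4) m3)
      convert h using 1
      funext i
      fin_cases i <;> simp
    have hv : v = v 0 • ![1, 0, 0, 0, 0] + v 1 • ![0, 1, 0, 0, 0] + v 2 • ![0, 0, 1, 0, 0] +
        v 3 • ![0, 0, 0, 1, 0] + v 4 • ![0, 0, 0, 0, 1] := by
      funext i
      fin_cases i <;> simp
    rw [hv]
    exact add_mem (add_mem (add_mem (add_mem (Submodule.smul_mem _ _ m0)
      (Submodule.smul_mem _ _ m1)) (Submodule.smul_mem _ _ m2))
      (Submodule.smul_mem _ _ m3)) (Submodule.smul_mem _ _ m4)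

/-- With `D = ∂_x + p∂_y + F∂_z + q∂_p`, `∂_q`, and `E := [∂_q, D]` on the jet space `ℝ⁵`,
the vectors `D(u), ∂_q(u), E(u), [∂_q, E](u), [D, E](u)` span `ℝ⁵` if and only if
`∂²F/∂q²(u) ≠ 0`: the 2-plane distribution spanned by `D` and `∂_q` is generic exactly
where `F_qq` is nonvanishing. -/
theorem jet_distribution_generic_iff (F : (Fin 5 → ℝ) → ℝ) (hF : ContDiff ℝ (⊤ : ℕ∞) F) :
    ∀ u : Fin 5 → ℝ,
      Submodule.span ℝ
          ({jetD F u, jetDq u, jetBracket jetDq (jetD F) u,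
            jetBracket jetDq (jetBracket jetDq (jetD F)) u,
            jetBracket (jetD F) (jetBracket jetDq (jetD F)) u} : Set (Fin 5 → ℝ)) = ⊤ ↔
        fderiv ℝ (fun v => fderiv ℝ F v ![0, 0, 0, 0, 1]) u ![0, 0, 0, 0, 1] ≠ 0 := by
  intro u
  obtain ⟨b, hb⟩ := jetB3_eq F hF u
  rw [jetB2_eq F hF u, hb, jetE_eq F hF u]
  simp only [jetD, jetDq]
  exact jet_span_part F u _ b _
end
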